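/- The pair β_n = 1/(q²;q)_{2n}, with α_{3m-1} = q^{6m²-m}, α_{3m} = q^{6m²+m}, α_{3m+1} = -q^{6m²+5m+1} - q^{6m²+7m+2}, is a Bailey pair relative to a = q; that is, β_n = ∑_{r=0}^n α_r/((q;q)_{n-r}(q²;q)_{n+r}) for all n ≥ 0. -/

import Mathlib

/-!
The Gaussian binomials `[m, k]_q` satisfy a finite form of Euler's pentagonal number theorem,
`∑ⱼ (-1)^j q^(j(3j+1)/2) [m, ⌊(m - 3j)/2⌋]_q = 1` for every `m`: passing from `m` to `m + 1`
with the two q-Pascal rules changes the `j`-th term by `F(j) - F(j - 1)` for an explicit `F`, so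
the sum does not depend on `m`. For `m = 2n + 1` the terms with `j = 2t`, `±(2t + 1)`,
`-(2t + 2)` carry the binomial `[2n + 1, n - r]_q` with `r = 3t`, `3t + 1`, `3t + 2` (for `j < 0`
by the symmetry `[m, k]_q = [m, m - k]_q`), and collecting them gives
`∑_r α_r [2n + 1, n - r]_q = 1`. Since
`[2n + 1, n - r]_q = (q²;q)_{2n} / ((q;q)_{n-r} (q²;q)_{n+r})`, dividing by `(q²;q)_{2n}` is the
Bailey pair relation.
-/

open Finset

noncomputable def qPoch (a q : ℂ) (n : ℕ) : ℂ := ∏ i ∈ Finset.range n, (1 - a * q ^ i)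

noncomputable def qInf (q : ℂ) : ℂ := ∏' i : ℕ, (1 - q ^ (i + 1))

def zsgn (m : ℤ) : ℤ := if 0 ≤ m then 1 else -1

noncomputable def alphaS5 (q : ℂ) (n : ℕ) : ℂ :=
  if n % 3 = 0 then q ^ (6 * ((n : ℤ) / 3) ^ 2 + ((n : ℤ) / 3) : ℤ)
  else if n % 3 = 1 then -q ^ (6 * ((n : ℤ) / 3) ^ 2 + 5 * ((n : ℤ) / 3) + 1 : ℤ) - q ^ (6 * ((n : ℤ) / 3) ^ 2 + 7 * ((n : ℤ) / 3) + 2 : ℤ)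
  else q ^ (6 * (((n : ℤ) + 1) / 3) ^ 2 - (((n : ℤ) + 1) / 3) : ℤ)

open Function

section GaussBinom

variable {R : Type*} [CommRing R]

/-- `[m, k]_q` for `k : ℤ`, zero unless `0 ≤ k ≤ m`. The `toNat` is harmless: for `k > m + 1`
the binomial it multiplies vanishes. -/
def gaussBinom (q : R) : ℕ → ℤ → R
  | 0, k => if k = 0 then 1 else 0
  | m + 1, k => gaussBinom q m k + q ^ ((m : ℤ) + 1 - k).toNat * gaussBinom q m (k - 1)

variable (q : R)

@[simp]
lemma gaussBinom_zero_left (k : ℤ) : gaussBinom q 0 k = if k = 0 then 1 else 0 := rfl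

lemma gaussBinom_succ (m : ℕ) (k : ℤ) :
    gaussBinom q (m + 1) k
      = gaussBinom q m k + q ^ ((m : ℤ) + 1 - k).toNat * gaussBinom q m (k - 1) := rfl

lemma gaussBinom_eq_zero {m : ℕ} {k : ℤ} (hk : k < 0 ∨ (m : ℤ) < k) : gaussBinom q m k = 0 := by
  induction m generalizing k with
  | zero => rw [gaussBinom_zero_left, if_neg (by omega)]
  | succ m ih =>
    push_cast at hk
    rw [gaussBinom_succ, ih (k := k) (by omega), ih (k := k - 1) (by omega), mul_zero, add_zero]

lemma bounds_of_gaussBinom_ne_zero {m : ℕ} {k : ℤ} (h : gaussBinom q m k ≠ 0) :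
    0 ≤ k ∧ k ≤ m := by
  by_contra hk
  exact h (gaussBinom_eq_zero q (by omega))

lemma pow_mul_gaussBinom_congr {a b m : ℕ} {k : ℤ} (h : 0 ≤ k → k ≤ m → a = b) :
    q ^ a * gaussBinom q m k = q ^ b * gaussBinom q m k := by
  by_cases hG : gaussBinom q m k = 0
  · rw [hG, mul_zero, mul_zero]
  · obtain ⟨h0, hm⟩ := bounds_of_gaussBinom_ne_zero q hG
    rw [h h0 hm]

@[simp]
lemma gaussBinom_zero_right (m : ℕ) : gaussBinom q m 0 = 1 := by
  induction m with
  | zero => rfl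
  | succ m ih => rw [gaussBinom_succ, ih, gaussBinom_eq_zero q (by omega), mul_zero, add_zero]

lemma gaussBinom_succ' (m : ℕ) (k : ℤ) :
    gaussBinom q (m + 1) k = q ^ k.toNat * gaussBinom q m k + gaussBinom q m (k - 1) := by
  induction m generalizing k with
  | zero =>
    simp only [gaussBinom_succ, gaussBinom_zero_left]
    by_cases h0 : k = 0
    · subst h0; norm_num
    · by_cases h1 : k = 1
      · subst h1; norm_num
      · rw [if_neg h0, if_neg (by omega : k - 1 ≠ 0)]; ring
  | succ m ih =>
    have hexp : q ^ ((m : ℤ) + 1 + 1 - k).toNat * q ^ (k - 1).toNat * gaussBinom q m (k - 1)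
        = q ^ k.toNat * q ^ ((m : ℤ) + 1 - k).toNat * gaussBinom q m (k - 1) := by
      simp only [← pow_add]
      exact pow_mul_gaussBinom_congr q fun _ _ => by omega
    have hpred := gaussBinom_succ q m (k - 1)
    rw [show (m : ℤ) + 1 - (k - 1) = m + 1 + 1 - k by ring] at hpred
    rw [gaussBinom_succ q (m + 1) k]
    push_cast
    linear_combination ih k + q ^ ((m : ℤ) + 1 + 1 - k).toNat * ih (k - 1)
      - q ^ k.toNat * gaussBinom_succ q m k - hpred + hexp

lemma gaussBinom_symm (m : ℕ) (k : ℤ) : gaussBinom q m (m - k) = gaussBinom q m k := by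
  induction m generalizing k with
  | zero => simp only [gaussBinom_zero_left, Nat.cast_zero, zero_sub, neg_eq_zero]
  | succ m ih =>
    rw [gaussBinom_succ, gaussBinom_succ',
      show ((m + 1 : ℕ) : ℤ) - k = m - (k - 1) by push_cast; ring,
      show (m : ℤ) + 1 - (m - (k - 1)) = k by ring, show (m : ℤ) - (k - 1) - 1 = m - k by ring,
      ih, ih, add_comm]

@[simp]
lemma gaussBinom_self (m : ℕ) : gaussBinom q m m = 1 := by
  simpa using gaussBinom_symm q m 0

end GaussBinom

def pent (j : ℤ) : ℕ := (j * (3 * j + 1) / 2).toNat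

lemma two_mul_pent (j : ℤ) : 2 * (pent j : ℤ) = j * (3 * j + 1) := by
  have hnonneg : 0 ≤ j * (3 * j + 1) := by
    rcases le_or_gt 0 j with hj | hj <;> nlinarith
  have heven : 2 ∣ j * (3 * j + 1) := by
    obtain ⟨c, hc⟩ := Int.even_mul_succ_self j
    exact ⟨c + j * j, by linear_combination hc⟩
  rw [pent, Int.toNat_of_nonneg (Int.ediv_nonneg hnonneg zero_le_two)]
  omega

lemma pent_sub_one (j : ℤ) : (pent (j - 1) : ℤ) = pent j - 3 * j + 1 := by
  linarith [two_mul_pent j, two_mul_pent (j - 1)]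

lemma zpow_eq_pow_pent {M : Type*} [DivInvMonoid M] (x : M) {j e : ℤ}
    (he : 2 * e = j * (3 * j + 1)) : x ^ e = x ^ pent j := by
  rw [← zpow_natCast, show (pent j : ℤ) = e by linarith [two_mul_pent j]]

section Pentagonal

variable {R : Type*} [CommRing R] (q : R)

def pentTerm (m : ℕ) (j : ℤ) : R :=
  j.negOnePow * q ^ pent j * gaussBinom q m ((m - 3 * j) / 2)

def pentFlux (m : ℕ) (j : ℤ) : R :=
  if Even ((m : ℤ) + j) then
    j.negOnePow * q ^ (pent j + ((m : ℤ) + 1 - (m - 3 * j) / 2).toNat)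
      * gaussBinom q m ((m - 3 * j) / 2 - 1)
  else 0

lemma pentTerm_succ (m : ℕ) (j : ℤ) :
    pentTerm q (m + 1) j = pentTerm q m j + (pentFlux q m j - pentFlux q m (j - 1)) := by
  set K := ((m : ℤ) - 3 * j) / 2 with hK
  by_cases h : Even ((m : ℤ) + j)
  · have h' : ¬ Even ((m : ℤ) + (j - 1)) := by rw [Int.even_iff] at h ⊢; omega
    have hK1 : (((m + 1 : ℕ) : ℤ) - 3 * j) / 2 = K := by rw [Int.even_iff] at h; omega
    rw [pentTerm, pentTerm, pentFlux, pentFlux, if_pos h, if_neg h', hK1, gaussBinom_succ, pow_add]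
    ring
  · have h' : Even ((m : ℤ) + (j - 1)) := by rw [Int.even_iff] at h ⊢; omega
    have hK1 : (((m + 1 : ℕ) : ℤ) - 3 * j) / 2 = K + 1 := by rw [Int.even_iff] at h; omega
    have hK2 : ((m : ℤ) - 3 * (j - 1)) / 2 = K + 2 := by rw [Int.even_iff] at h; omega
    have hsign : ((j - 1).negOnePow : R) = -j.negOnePow := by
      rw [Int.negOnePow_sub, Int.negOnePow_one, mul_neg_one, Units.val_neg, Int.cast_neg]
    have hexp : q ^ pent j * q ^ (K + 1).toNat * gaussBinom q m (K + 1)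
        = q ^ pent (j - 1) * q ^ ((m : ℤ) + 1 - (K + 2)).toNat * gaussBinom q m (K + 1) := by
      simp only [← pow_add]
      have := pent_sub_one j
      exact pow_mul_gaussBinom_congr q fun _ _ => by rw [Int.even_iff] at h; omega
    rw [pentTerm, pentTerm, pentFlux, pentFlux, if_neg h, if_pos h', hK1, hK2, gaussBinom_succ',
      hsign, show K + 2 - 1 = K + 1 by ring, add_sub_cancel_right, pow_add]
    linear_combination (j.negOnePow : R) * hexp

lemma hasFiniteSupport_pentTerm (m : ℕ) : (pentTerm q m).HasFiniteSupport := by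
  refine (Set.finite_Icc (-(m : ℤ)) m).subset fun j hj => ?_
  have := bounds_of_gaussBinom_ne_zero q (right_ne_zero_of_mul hj)
  simp only [Set.mem_Icc]
  omega

lemma hasFiniteSupport_pentFlux (m : ℕ) : (pentFlux q m).HasFiniteSupport := by
  refine (Set.finite_Icc (-(m : ℤ) - 1) m).subset fun j hj => ?_
  have hj' : pentFlux q m j ≠ 0 := hj
  unfold pentFlux at hj'
  split_ifs at hj'
  · have := bounds_of_gaussBinom_ne_zero q (right_ne_zero_of_mul hj')
    simp only [Set.mem_Icc]
    omega
  · exact (hj' rfl).elim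

lemma finsum_pentTerm_succ (m : ℕ) : ∑ᶠ j, pentTerm q (m + 1) j = ∑ᶠ j, pentTerm q m j := by
  have hflux := hasFiniteSupport_pentFlux q m
  have hflux' : (fun j => pentFlux q m (j - 1)).HasFiniteSupport :=
    hflux.fun_comp_of_injective sub_left_injective
  have hdiff : (fun j => pentFlux q m j - pentFlux q m (j - 1)).HasFiniteSupport := hflux.sub hflux'
  have hshift : ∑ᶠ j, pentFlux q m (j - 1) = ∑ᶠ j, pentFlux q m j :=
    finsum_comp_equiv (Equiv.subRight 1)
  simp_rw [pentTerm_succ]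
  rw [finsum_add_distrib (hasFiniteSupport_pentTerm q m) hdiff,
    finsum_sub_distrib hflux hflux', hshift, sub_self, add_zero]

theorem finsum_pentTerm (m : ℕ) : ∑ᶠ j, pentTerm q m j = 1 := by
  induction m with
  | zero =>
    rw [finsum_eq_single _ 0 fun j hj => ?_]
    · simp [pentTerm, pent]
    · simp only [pentTerm, gaussBinom_zero_left]
      rw [if_neg (by omega), mul_zero]
  | succ m ih => rw [finsum_pentTerm_succ, ih]

/-- The `r` whose `alphaS5 q r` contains the `j`-th pentagonal term:
`2t, ±(2t + 1), -(2t + 2) ↦ 3t, 3t + 1, 3t + 2`. -/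
def pentIndex (j : ℤ) : ℤ := if 0 ≤ j then 3 * j / 2 else (-3 * j - 1) / 2

lemma pentTerm_two_mul_add_one (n : ℕ) (j : ℤ) :
    pentTerm q (2 * n + 1) j
      = j.negOnePow * q ^ pent j * gaussBinom q (2 * n + 1) (n - pentIndex j) := by
  rw [pentTerm, pentIndex]
  split_ifs with hj
  · congr 2; push_cast; omega
  · rw [← gaussBinom_symm q (2 * n + 1) (n - _)]
    congr 2; push_cast; omega

end Pentagonal

def pentFiber (r : ℕ) : Finset ℤ :=
  if r % 3 = 0 then {2 * (r / 3 : ℤ)}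
  else if r % 3 = 1 then {2 * (r / 3 : ℤ) + 1, -(2 * (r / 3 : ℤ) + 1)}
  else {-(2 * ((r + 1) / 3 : ℤ))}

lemma mem_pentFiber {r : ℕ} {j : ℤ} : j ∈ pentFiber r ↔ pentIndex j = r := by
  unfold pentFiber pentIndex
  split_ifs <;> simp only [mem_insert, mem_singleton] <;> omega

lemma alphaS5_eq_sum_pentFiber (q : ℂ) (r : ℕ) :
    alphaS5 q r = ∑ j ∈ pentFiber r, (j.negOnePow : ℂ) * q ^ pent j := by
  rw [alphaS5, pentFiber]
  split_ifs with h0 h1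
  · rw [sum_singleton, Int.negOnePow_two_mul, zpow_eq_pow_pent q (j := 2 * (r / 3 : ℤ)) (by ring)]
    simp
  · rw [sum_pair (by omega), Int.negOnePow_neg, Int.negOnePow_two_mul_add_one,
      zpow_eq_pow_pent q (j := -(2 * (r / 3 : ℤ) + 1)) (by ring),
      zpow_eq_pow_pent q (j := 2 * (r / 3 : ℤ) + 1) (by ring)]
    push_cast
    ring
  · rw [sum_singleton, Int.negOnePow_neg, Int.negOnePow_two_mul,
      zpow_eq_pow_pent q (j := -(2 * ((r + 1) / 3 : ℤ))) (by ring)]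
    simp

theorem sum_alphaS5_mul_gaussBinom (q : ℂ) (n : ℕ) :
    ∑ r ∈ range (n + 1), alphaS5 q r * gaussBinom q (2 * n + 1) (n - r) = 1 := by
  have hdisj : (range (n + 1) : Set ℕ).PairwiseDisjoint pentFiber := fun a _ b _ hab =>
    disjoint_left.2 fun j ha hb => hab (by rw [mem_pentFiber] at ha hb; omega)
  have hsupp : support (pentTerm q (2 * n + 1)) ⊆ (range (n + 1)).biUnion pentFiber := by
    intro j hj
    rw [mem_support, pentTerm_two_mul_add_one] at hj
    have := bounds_of_gaussBinom_ne_zero q (right_ne_zero_of_mul hj)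
    simp only [coe_biUnion, coe_range, Set.mem_iUnion, Set.mem_Iio, mem_coe, mem_pentFiber]
    have hnonneg : 0 ≤ pentIndex j := by unfold pentIndex; split_ifs <;> omega
    exact ⟨(pentIndex j).toNat, by omega, by omega⟩
  calc ∑ r ∈ range (n + 1), alphaS5 q r * gaussBinom q (2 * n + 1) (n - r)
      = ∑ r ∈ range (n + 1), ∑ j ∈ pentFiber r, pentTerm q (2 * n + 1) j := by
        refine sum_congr rfl fun r _ => ?_
        rw [alphaS5_eq_sum_pentFiber, sum_mul]
        refine sum_congr rfl fun j hj => ?_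
        rw [pentTerm_two_mul_add_one, mem_pentFiber.1 hj]
    _ = ∑ j ∈ (range (n + 1)).biUnion pentFiber, pentTerm q (2 * n + 1) j :=
        (sum_biUnion hdisj).symm
    _ = ∑ᶠ j, pentTerm q (2 * n + 1) j := (finsum_eq_sum_of_support_subset _ hsupp).symm
    _ = 1 := finsum_pentTerm q _

@[simp]
lemma qPoch_zero (a q : ℂ) : qPoch a q 0 = 1 := prod_range_zero _

lemma qPoch_succ (a q : ℂ) (k : ℕ) : qPoch a q (k + 1) = qPoch a q k * (1 - a * q ^ k) :=
  prod_range_succ _ _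

lemma qPoch_self_succ (q : ℂ) (k : ℕ) : qPoch q q (k + 1) = (1 - q) * qPoch (q ^ 2) q k := by
  simp only [qPoch, prod_range_succ', pow_zero, mul_one, pow_succ]
  rw [mul_comm]
  congr 1
  exact prod_congr rfl fun i _ => by ring

lemma qPoch_ne_zero {a q : ℂ} (ha : ‖a‖ < 1) (hq : ‖q‖ ≤ 1) (k : ℕ) : qPoch a q k ≠ 0 := by
  refine prod_ne_zero_iff.2 fun i _ => sub_ne_zero.2 fun h => ?_
  have : ‖a * q ^ i‖ < 1 := by
    rw [norm_mul, norm_pow]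
    exact (mul_le_of_le_one_right (norm_nonneg a) (pow_le_one₀ (norm_nonneg q) hq)).trans_lt ha
  rw [← h, norm_one] at this
  exact this.false

lemma gaussBinom_mul_qPoch (q : ℂ) (k l : ℕ) :
    gaussBinom q (k + l) k * (qPoch q q k * qPoch q q l) = qPoch q q (k + l) := by
  induction k generalizing l with
  | zero => simp
  | succ k ihk =>
    induction l with
    | zero => rw [add_zero, gaussBinom_self, qPoch_zero, one_mul, mul_one]
    | succ l ihl =>
      have hk := ihk (l + 1)
      rw [show k + (l + 1) = k + 1 + l by ring] at hk
      rw [show k + 1 + (l + 1) = k + 1 + l + 1 by ring, gaussBinom_succ,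
        show ((k + 1 + l : ℕ) : ℤ) + 1 - (k + 1 : ℕ) = (l + 1 : ℕ) by push_cast; ring,
        show ((k + 1 : ℕ) : ℤ) - 1 = k by push_cast; ring, Int.toNat_natCast]
      rw [qPoch_succ q q k, qPoch_succ q q l, qPoch_succ q q (k + 1 + l)] at *
      linear_combination (1 - q * q ^ l) * ihl + q ^ (l + 1) * (1 - q * q ^ k) * hk

lemma inv_qPoch_mul_qPoch_eq_gaussBinom_div {q : ℂ} (hq : ‖q‖ < 1) {n r : ℕ} (hr : r ≤ n) :
    (qPoch q q (n - r) * qPoch (q ^ 2) q (n + r))⁻¹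
      = gaussBinom q (2 * n + 1) (n - r) / qPoch (q ^ 2) q (2 * n) := by
  have hq2 : ‖q ^ 2‖ < 1 := by rw [norm_pow]; exact pow_lt_one₀ (norm_nonneg q) hq two_ne_zero
  have h1q : (1 : ℂ) - q ≠ 0 := sub_ne_zero.2 fun h1 => by simp [← h1] at hq
  have h := gaussBinom_mul_qPoch q (n - r) (n + r + 1)
  rw [show n - r + (n + r + 1) = 2 * n + 1 by omega, Nat.cast_sub hr, qPoch_self_succ,
    qPoch_self_succ] at h
  have := qPoch_ne_zero hq hq.le (n - r)
  have := qPoch_ne_zero hq2 hq.le (n + r)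
  have := qPoch_ne_zero hq2 hq.le (2 * n)
  field_simp
  apply mul_left_cancel₀ h1q
  linear_combination -h

theorem stmt5 (q : ℂ) (hq : ‖q‖ < 1) (n : ℕ) :
    1 / qPoch (q ^ 2) q (2 * n)
      = ∑ r ∈ Finset.range (n + 1), alphaS5 q r / (qPoch q q (n - r) * qPoch (q ^ 2) q (n + r)) := by
  rw [← sum_alphaS5_mul_gaussBinom q n, sum_div]
  refine sum_congr rfl fun r hr => ?_
  rw [div_eq_mul_inv (alphaS5 q r),
    inv_qPoch_mul_qPoch_eq_gaussBinom_div hq (mem_range_succ_iff.1 hr), mul_div_assoc]
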